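/- Assume the CI model is Markov with respect to a DAG G* and satisfies adjacency-faithfulness. Then every DAG output by the sparsest permutation algorithm (i.e., every G_π achieving the minimum number of edges over all permutations π) has skeleton equal to the skeleton of G*. -/

import Mathlib

open scoped Classical

/-- A directed acyclic graph on `Fin p`: a finite edge set together with a
topological ordering witnessing acyclicity. -/
structure DAG (p : ℕ) where
  edges : Finset (Fin p × Fin p)
  acyclic : ∃ σ : Equiv.Perm (Fin p), ∀ e ∈ edges, σ.symm e.1 < σ.symm e.2

namespace DAG

variable {p : ℕ}

def edgeRel (G : DAG p) (a b : Fin p) : Prop := (a, b) ∈ G.edges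

/-- adjacency in the skeleton -/
def adj (G : DAG p) (a b : Fin p) : Prop := (a, b) ∈ G.edges ∨ (b, a) ∈ G.edges

/-- the skeleton as a finite set of unordered pairs -/
def skeleton (G : DAG p) : Finset (Sym2 (Fin p)) := G.edges.image (fun e => s(e.1, e.2))

/-- `b` is a collider on a path segment `a - b - c`. -/
def isCollider (G : DAG p) (a b c : Fin p) : Prop := (a, b) ∈ G.edges ∧ (c, b) ∈ G.edges

/-- `b` is in `S` or an ancestor of some element of `S`. -/
def ancestorOfSet (G : DAG p) (b : Fin p) (S : Finset (Fin p)) : Prop :=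
  ∃ s ∈ S, Relation.ReflTransGen G.edgeRel b s

/-- a (simple, undirected) path from `i` to `j` in the skeleton, as a list of vertices -/
def IsTrail (G : DAG p) (i j : Fin p) (l : List (Fin p)) : Prop :=
  l.Chain' G.adj ∧ l.Nodup ∧ 2 ≤ l.length ∧ l.head? = some i ∧ l.getLast? = some j

/-- the path `l` d-connects its endpoints given `S`: every collider on it is in `S` or
has a descendant in `S`, and every non-collider on it is not in `S`. -/
def dConnectsPath (G : DAG p) (S : Finset (Fin p)) (l : List (Fin p)) : Prop :=
  ∀ a b c : Fin p, [a, b, c] <:+: l →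
    (G.isCollider a b c → G.ancestorOfSet b S) ∧ (¬ G.isCollider a b c → b ∉ S)

def dConnected (G : DAG p) (i j : Fin p) (S : Finset (Fin p)) : Prop :=
  ∃ l : List (Fin p), G.IsTrail i j l ∧ G.dConnectsPath S l

def dSep (G : DAG p) (i j : Fin p) (S : Finset (Fin p)) : Prop :=
  i ≠ j ∧ ¬ G.dConnected i j S

end DAG

/-- A (pairwise) conditional independence model: `CI i j S` means
`X_i ⫫ X_j | X_S`. -/
abbrev CIModel (p : ℕ) := Fin p → Fin p → Finset (Fin p) → Prop

variable {p : ℕ}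

/-- `G` is Markov w.r.t. the CI model: every d-separation is a CI statement. -/
def Markov (G : DAG p) (CI : CIModel p) : Prop :=
  ∀ i j S, G.dSep i j S → CI i j S

/-- Markov equivalence: same d-separation statements. -/
def MarkovEquiv (G G' : DAG p) : Prop :=
  ∀ i j S, G.dSep i j S ↔ G'.dSep i j S

/-- `π` is a topological ordering of `G`. -/
def IsTopOrder (G : DAG p) (π : Equiv.Perm (Fin p)) : Prop :=
  ∀ e ∈ G.edges, π.symm e.1 < π.symm e.2

/-- the predecessors `{π 0, …, π (k-1)}` of position `k` in the ordering `π` -/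
def predSet (π : Equiv.Perm (Fin p)) (k : Fin p) : Finset (Fin p) :=
  (Finset.univ.filter (fun m => m < k)).image π

/-- The minimal I-map `G_π`: for `j < k` there is an edge `π j → π k` iff
`π j` and `π k` are conditionally dependent given all other predecessors of `π k`. -/
noncomputable def minimalIMap (CI : CIModel p) (π : Equiv.Perm (Fin p)) : DAG p where
  edges := Finset.univ.filter (fun q : Fin p × Fin p =>
    ∃ j k : Fin p, j < k ∧ q = (π j, π k) ∧ ¬ CI (π j) (π k) ((predSet π k).erase (π j)))
  acyclic := ⟨π, by
    intro e he
    rw [Finset.mem_filter] at he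
    obtain ⟨-, j, k, hjk, rfl, -⟩ := he
    simpa using hjk⟩

/-- the minimal number of edges of a minimal I-map `G_π` over all permutations `π` -/
noncomputable def spScore (CI : CIModel p) : ℕ :=
  ((Finset.univ : Finset (Equiv.Perm (Fin p))).image
    (fun π => (minimalIMap CI π).edges.card)).min' (Finset.univ_nonempty.image _)

/-- adjacency-faithfulness: endpoints of edges of `G` are conditionally dependent
given any conditioning set. -/
def AdjFaithful (G : DAG p) (CI : CIModel p) : Prop :=
  ∀ e ∈ G.edges, ∀ S : Finset (Fin p), e.1 ∉ S → e.2 ∉ S →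
    ¬ CI e.1 e.2 S ∧ ¬ CI e.2 e.1 S

/-- the sparsest Markov representation assumption -/
def SMR (G : DAG p) (CI : CIModel p) : Prop :=
  Markov G CI ∧
    ∀ G' : DAG p, Markov G' CI → ¬ MarkovEquiv G' G → G.edges.card < G'.edges.card

/-- the set of d-separation statements of `G` -/
def DsepSet (G : DAG p) : Set (Fin p × Fin p × Finset (Fin p)) :=
  {t | G.dSep t.1 t.2.1 t.2.2}

/-- P-minimality: no Markov DAG entails strictly more d-separations. -/
def PMinimal (G : DAG p) (CI : CIModel p) : Prop :=
  ∀ G' : DAG p, Markov G' CI → ¬ (DsepSet G ⊂ DsepSet G')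


/-!
The minimal I-map of a topological ordering `σ` of `G` is a subgraph of `G`: if `σ j` and
`σ k` (`j < k`) are not adjacent in `G`, they are d-separated by the other predecessors of
`σ k`, so the Markov property removes the edge. Hence the sparsest score is at most the
number of edges of `G`. On the other hand, adjacency-faithfulness forces every edge of `G`
into every minimal I-map. A sparsest `G_π` thus contains the skeleton of `G` while having
no more edges than `G`, and the two skeletons coincide.
-/

namespace DAG

variable {G : DAG p}

theorem ne_of_mem_edges {a b : Fin p} (h : (a, b) ∈ G.edges) : a ≠ b := by
  obtain ⟨σ, hσ⟩ := G.acyclic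
  rintro rfl
  exact lt_irrefl _ (hσ _ h)

theorem card_skeleton (G : DAG p) : G.skeleton.card = G.edges.card := by
  refine Finset.card_image_of_injOn fun e he f hf hef => ?_
  obtain ⟨σ, hσ⟩ := G.acyclic
  rcases Sym2.eq_iff.mp hef with ⟨h₁, h₂⟩ | ⟨h₁, h₂⟩
  · exact Prod.ext h₁ h₂
  · have hef := hσ e he
    have hfe := hσ f hf
    rw [h₁, h₂] at hef
    exact absurd hef hfe.asymm

theorem dConnectsPath_of_infix {S : Finset (Fin p)} {l₁ l₂ : List (Fin p)} (h : l₁ <:+: l₂)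
    (hl₂ : G.dConnectsPath S l₂) : G.dConnectsPath S l₁ :=
  fun a b c habc => hl₂ a b c (habc.trans h)

theorem dConnectsPath_reverse {S : Finset (Fin p)} {l : List (Fin p)}
    (hl : G.dConnectsPath S l) : G.dConnectsPath S l.reverse := by
  intro a b c habc
  have hcba := hl c b a (List.reverse_infix.mp (by simpa using habc))
  have hcomm : G.isCollider c b a ↔ G.isCollider a b c := and_comm
  rwa [hcomm] at hcba

theorem IsTrail.reverse {i j : Fin p} {l : List (Fin p)} (h : G.IsTrail i j l) :
    G.IsTrail j i l.reverse := by
  obtain ⟨hchain, hnodup, hlen, hhead, hlast⟩ := h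
  refine ⟨List.isChain_reverse.mpr (hchain.imp fun _ _ => Or.symm), List.nodup_reverse.mpr hnodup,
    by simpa using hlen, by rwa [List.head?_reverse], by rwa [List.getLast?_reverse]⟩

theorem dConnected.symm {i j : Fin p} {S : Finset (Fin p)} (h : G.dConnected i j S) :
    G.dConnected j i S :=
  let ⟨l, hl, hconn⟩ := h
  ⟨l.reverse, hl.reverse, dConnectsPath_reverse hconn⟩

end DAG

theorem mem_predSet {π : Equiv.Perm (Fin p)} {k x : Fin p} : x ∈ predSet π k ↔ π.symm x < k := by
  simp only [predSet, Finset.mem_image, Finset.mem_filter, Finset.mem_univ, true_and]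
  exact ⟨fun ⟨m, hm, hx⟩ => hx ▸ by simpa using hm, fun hx => ⟨π.symm x, hx, by simp⟩⟩

namespace IsTopOrder

variable {G : DAG p} {σ : Equiv.Perm (Fin p)}

theorem le_of_reflTransGen (hσ : IsTopOrder G σ) {x y : Fin p}
    (h : Relation.ReflTransGen G.edgeRel x y) : σ.symm x ≤ σ.symm y := by
  induction h with
  | refl => exact le_rfl
  | tail _ hyz ih => exact ih.trans (hσ _ hyz).le

/-- Each inner vertex is a descendant of `x`, hence not an ancestor of `S`, so it must be a
non-collider: the path keeps following out-edges. -/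
theorem le_of_mem_of_dConnectsPath (hσ : IsTopOrder G σ) {S : Finset (Fin p)} :
    ∀ {x y : Fin p} {l : List (Fin p)}, (∀ s ∈ S, σ.symm s < σ.symm x) → (x, y) ∈ G.edges →
      (x :: y :: l).IsChain G.adj → G.dConnectsPath S (x :: y :: l) →
      ∀ v ∈ x :: y :: l, σ.symm x ≤ σ.symm v := by
  intro x y l
  induction l generalizing x y with
  | nil =>
    intro _ hxy _ _ v hv
    rcases List.mem_pair.mp hv with rfl | rfl
    exacts [le_rfl, (hσ _ hxy).le]
  | cons z l ih =>
    intro hS hxy hchain hconn v hv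
    have hσxy := hσ _ hxy
    have hSy : ∀ s ∈ S, σ.symm s < σ.symm y := fun s hs => (hS s hs).trans hσxy
    have hy : ¬ G.ancestorOfSet y S := fun ⟨s, hs, hys⟩ =>
      (hσ.le_of_reflTransGen hys).not_gt (hSy s hs)
    have hyz : (y, z) ∈ G.edges := by
      refine (List.isChain_cons_cons.mp (List.isChain_cons_cons.mp hchain).2).1.resolve_right ?_
      intro hzy
      exact hy ((hconn x y z (List.prefix_append [x, y, z] l).isInfix).1 ⟨hxy, hzy⟩)
    have hrest := ih hSy hyz (List.isChain_cons_cons.mp hchain).2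
      (DAG.dConnectsPath_of_infix (List.suffix_cons x _).isInfix hconn)
    rcases List.mem_cons.mp hv with rfl | hv
    exacts [le_rfl, hσxy.le.trans (hrest v hv)]

theorem not_dConnected_predSet (hσ : IsTopOrder G σ) {a b : Fin p}
    (hab : σ.symm a < σ.symm b) (hnadj : (a, b) ∉ G.edges) :
    ¬ G.dConnected b a ((predSet σ (σ.symm b)).erase a) := by
  rintro ⟨l, ⟨hchain, -, hlen, hhead, hlast⟩, hconn⟩
  rcases l with _ | ⟨b', _ | ⟨c, rest⟩⟩
  · simp at hlen
  · simp at hlen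
  obtain rfl : b = b' := by simpa using hhead.symm
  rcases (List.isChain_cons_cons.mp hchain).1 with hbc | hcb
  · have hba := hσ.le_of_mem_of_dConnectsPath
      (fun s hs => mem_predSet.mp (Finset.mem_of_mem_erase hs)) hbc hchain hconn a
      (List.mem_of_getLast? hlast)
    exact hba.not_gt hab
  · -- the path enters `b` from a predecessor `c ≠ a`, which is a conditioned non-collider
    rcases rest with _ | ⟨d, rest⟩
    · obtain rfl : c = a := by simpa using hlast
      exact hnadj hcb
    have hcS : c ∈ (predSet σ (σ.symm b)).erase a :=
      Finset.mem_erase.mpr ⟨by rintro rfl; exact hnadj hcb, mem_predSet.mpr (hσ _ hcb)⟩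
    refine (hconn b c d (List.prefix_append [b, c, d] rest).isInfix).2 ?_ hcS
    exact fun hbcd => (hσ _ hbcd.1).asymm (hσ _ hcb)

theorem dSep_predSet (hσ : IsTopOrder G σ) {a b : Fin p} (hab : σ.symm a < σ.symm b)
    (hnadj : (a, b) ∉ G.edges) : G.dSep a b ((predSet σ (σ.symm b)).erase a) :=
  ⟨by rintro rfl; exact lt_irrefl _ hab, fun h => hσ.not_dConnected_predSet hab hnadj h.symm⟩

end IsTopOrder

section MinimalIMap

variable {CI : CIModel p} {G : DAG p}

theorem mem_minimalIMap_edges {π : Equiv.Perm (Fin p)} {a b : Fin p} :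
    (a, b) ∈ (minimalIMap CI π).edges ↔
      π.symm a < π.symm b ∧ ¬ CI a b ((predSet π (π.symm b)).erase a) := by
  simp only [minimalIMap, Finset.mem_filter, Finset.mem_univ, true_and, Prod.mk.injEq]
  constructor
  · rintro ⟨j, k, hjk, ⟨rfl, rfl⟩, hCI⟩
    simpa using ⟨hjk, hCI⟩
  · rintro ⟨hab, hCI⟩
    exact ⟨π.symm a, π.symm b, hab, by simp, by simpa using hCI⟩

theorem minimalIMap_edges_subset (hM : Markov G CI) {σ : Equiv.Perm (Fin p)}
    (hσ : IsTopOrder G σ) : (minimalIMap CI σ).edges ⊆ G.edges := by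
  rintro ⟨a, b⟩ h
  obtain ⟨hab, hCI⟩ := mem_minimalIMap_edges.mp h
  by_contra hnadj
  exact hCI (hM _ _ _ (hσ.dSep_predSet hab hnadj))

theorem mk_mem_skeleton_minimalIMap (π : Equiv.Perm (Fin p)) {a b : Fin p} (hab : a ≠ b)
    (hdep : ∀ S : Finset (Fin p), a ∉ S → b ∉ S → ¬ CI a b S ∧ ¬ CI b a S) :
    s(a, b) ∈ (minimalIMap CI π).skeleton := by
  wlog h : π.symm a < π.symm b generalizing a b
  · rw [Sym2.eq_swap]
    exact this hab.symm (fun S hb ha => (hdep S ha hb).symm)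
      ((not_lt.mp h).lt_of_ne (π.symm.injective.ne hab.symm))
  have hb : b ∉ (predSet π (π.symm b)).erase a := fun hb =>
    lt_irrefl _ (mem_predSet.mp (Finset.mem_of_mem_erase hb))
  exact Finset.mem_image_of_mem _
    (mem_minimalIMap_edges.mpr ⟨h, (hdep _ (Finset.notMem_erase a _) hb).1⟩)

theorem skeleton_subset_minimalIMap_skeleton (hAF : AdjFaithful G CI) (π : Equiv.Perm (Fin p)) :
    G.skeleton ⊆ (minimalIMap CI π).skeleton := by
  refine Finset.image_subset_iff.mpr fun e he => ?_
  exact mk_mem_skeleton_minimalIMap π (DAG.ne_of_mem_edges he) (hAF e he)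

theorem spScore_le (CI : CIModel p) (π : Equiv.Perm (Fin p)) :
    spScore CI ≤ (minimalIMap CI π).edges.card :=
  Finset.min'_le _ _ (Finset.mem_image_of_mem _ (Finset.mem_univ π))

end MinimalIMap

/-- If the CI model is Markov w.r.t. `G` and adjacency-faithful, then every output
of the sparsest permutation algorithm (every `G_π` achieving the minimum edge count
over all permutations) has skeleton equal to that of `G`. -/
theorem sp_skeleton_recovery (CI : CIModel p) (G : DAG p)
    (hMarkov : Markov G CI) (hAF : AdjFaithful G CI) :
    ∀ π : Equiv.Perm (Fin p), (minimalIMap CI π).edges.card = spScore CI →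
      (minimalIMap CI π).skeleton = G.skeleton := by
  intro π hπ
  obtain ⟨σ, hσ⟩ := G.acyclic
  refine (Finset.eq_of_subset_of_card_le (skeleton_subset_minimalIMap_skeleton hAF π) ?_).symm
  calc (minimalIMap CI π).skeleton.card = spScore CI := by rw [DAG.card_skeleton, hπ]
    _ ≤ (minimalIMap CI σ).edges.card := spScore_le CI σ
    _ ≤ G.edges.card := Finset.card_le_card (minimalIMap_edges_subset hMarkov hσ)
    _ = G.skeleton.card := G.card_skeleton.symm
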